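/- Let μ = Φ_* ν be the pushforward to Z = {α,β}^ℤ of the Bernoulli(1/2,1/2) measure ν under Φ. Then μ is a σ-invariant ergodic measure with μ(Y) = 1, the measure-theoretic entropy h_μ(σ) = 0, and 5/32 ≤ μ([β]) ≤ 6/32 where [β] = {z : z_0 = β}. -/

import Mathlib

/-
The odometer acts on the first `k` digits as `DN k (Tod x) = DN k x + 1 mod 2 ^ k`. Hence every
`Tod`-invariant finite measure gives the same mass to all cylinders of a given length, i.e. it is a
multiple of the fair-coin measure `ν`. The restriction of `ν` to an invariant set `s` is invariant,
so `ν s = ν s ^ 2`: `Tod` is ergodic, and ergodicity passes to the factor `μ = Φ_* ν`.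

`x ∈ A` iff `DN i x < i` for some `i ≥ 5`, and the least such `i` is either `5` or has
`DN i x = i - 1`; this gives `5/32 ≤ ν A ≤ 5/32 + ∑_{i > 5} 2^(-i) = 6/32`.

For zero entropy, let `2 ^ K` be of order `n`. The word `Φ(x)_0 … Φ(x)_(n-1)` is determined by
`DN K x` and two numbers `≤ n`: the levels `i ≤ K` are read off `DN K x`, and for `i > K` the
times `m < n` with `DN i x + m mod 2 ^ i < i` form an initial segment (no wrap-around) together
with an interval starting at the unique `β < 2 ^ K` with `β + DN K x ≡ 0 mod 2 ^ K`
(wrap-around). So only `O(n ^ 3)` words of length `n` have positive measure, and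
`H_n(μ) ≤ log O(n ^ 3) = o(n)`.
-/

open MeasureTheory Filter Topology
open scoped ENNReal

/-- The odometer map on `X = {0,1}^ℕ` (adding one with carry in binary). -/
def Tod (x : ℕ → Bool) : ℕ → Bool := fun k =>
  if ∀ i < k, x i = true then !(x k) else x k

/-- The inverse of the odometer map (subtracting one with borrow). -/
def TodInv (x : ℕ → Bool) : ℕ → Bool := fun k =>
  if ∀ i < k, x i = false then !(x k) else x k

/-- The number determined by the first `k` binary digits of `x`. -/
def DN (k : ℕ) (x : ℕ → Bool) : ℕ := ∑ i ∈ Finset.range k, 2 ^ i * (x i).toNat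

/-- The cylinder `[0^i]` of sequences starting with `i` zeros. -/
def cyl0 (i : ℕ) : Set (ℕ → Bool) := {x | ∀ j < i, x j = false}

/-- `A = ⋃_{i=5}^∞ ⋃_{j=0}^{i-1} T^j([0^i])`. -/
def Aset : Set (ℕ → Bool) := ⋃ (i : ℕ) (_ : 5 ≤ i) (j : ℕ) (_ : j < i), Tod^[j] '' cyl0 i

/-- `A_k = ⋃_{i=5}^{k} ⋃_{j=0}^{i-1} T^j([0^i])`. -/
def Ak (k : ℕ) : Set (ℕ → Bool) :=
  ⋃ (i : ℕ) (_ : 5 ≤ i) (_ : i ≤ k) (j : ℕ) (_ : j < i), Tod^[j] '' cyl0 i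

/-- `E_k = ⋃_{i=k+1}^∞ ⋃_{j=0}^{i-1} T^j([0^i])`. -/
def Ek (k : ℕ) : Set (ℕ → Bool) :=
  ⋃ (i : ℕ) (_ : k + 1 ≤ i) (j : ℕ) (_ : j < i), Tod^[j] '' cyl0 i

/-- `T^n` for `n : ℤ` (using the inverse odometer for negative `n`). -/
def zIter (n : ℤ) (x : ℕ → Bool) : ℕ → Bool :=
  if 0 ≤ n then Tod^[n.toNat] x else TodInv^[(-n).toNat] x

/-- The factor map `Φ : X → Z = {α,β}^ℤ`, with `β = true`, `α = false`:
`Φ(x)_n = β` iff `T^n(x) ∈ A`. -/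
noncomputable def Phi (x : ℕ → Bool) : ℤ → Bool := fun n =>
  @decide (zIter n x ∈ Aset) (Classical.propDecidable _)

/-- The subshift `Y`, the closure of `Φ(X)` in the full two-sided shift. -/
def Ysub : Set (ℤ → Bool) := closure (Set.range Phi)

/-- The shift map on `Z = {α,β}^ℤ`. -/
def shiftZ (z : ℤ → Bool) : ℤ → Bool := fun n => z (n + 1)

/-- The cylinder in `Z` given by a word `w` of length `n` placed at positions `0,…,n-1`. -/
def cylZ (n : ℕ) (w : Fin n → Bool) : Set (ℤ → Bool) :=
  {z | ∀ i : Fin n, z ((i : ℕ) : ℤ) = w i}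

theorem Finset.eq_Ico_of_forall_Icc_subset {S : Finset ℕ} {b : ℕ}
    (h : ∀ m ∈ S, b ≤ m ∧ Finset.Icc b m ⊆ S) : S = Finset.Ico b (b + S.card) := by
  refine Finset.eq_of_subset_of_card_le (fun m hm => ?_) (by simp)
  obtain ⟨hbm, hsub⟩ := h m hm
  have := Finset.card_le_card hsub
  rw [Nat.card_Icc] at this
  rw [Finset.mem_Ico]
  omega

theorem Nat.add_mod_lt_iff {N d m i : ℕ} (hd : d < N) (hm : m < N) :
    (d + m) % N < i ↔ d + m < i ∨ N ≤ d + m ∧ d + m < N + i := by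
  rcases lt_or_ge (d + m) N with h | h
  · rw [Nat.mod_eq_of_lt h]
    omega
  · rw [Nat.mod_eq_sub_mod h, Nat.mod_eq_of_lt (by omega)]
    omega

theorem sum_negMulLog_le_log_card {ι : Type*} (s : Finset ι) {p : ι → ℝ}
    (h0 : ∀ i ∈ s, 0 ≤ p i) (h1 : ∑ i ∈ s, p i = 1) :
    ∑ i ∈ s, Real.negMulLog (p i) ≤ Real.log s.card := by
  have hs : (0 : ℝ) < s.card := by
    rcases s.eq_empty_or_nonempty with rfl | hne
    · simp at h1
    · exact_mod_cast hne.card_pos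
  have hJensen := Real.concaveOn_negMulLog.le_map_sum (t := s) (w := fun _ => (s.card : ℝ)⁻¹)
    (p := p) (fun _ _ => by positivity) (by simp [hs.ne']) h0
  simp only [smul_eq_mul, ← Finset.mul_sum, h1, mul_one] at hJensen
  rw [Real.negMulLog, Real.log_inv] at hJensen
  rw [← mul_le_mul_iff_of_pos_left (inv_pos.2 hs)]
  linarith

theorem tendsto_log_mul_pow_div_atTop {C : ℝ} (hC : C ≠ 0) (k : ℕ) :
    Tendsto (fun n : ℕ => Real.log (C * n ^ k) / n) atTop (𝓝 0) := by
  have hlog : Tendsto (fun n : ℕ => Real.log n / n) atTop (𝓝 0) := by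
    simpa [Function.comp_def] using
      (Real.tendsto_pow_log_div_mul_add_atTop 1 0 1 one_ne_zero).comp tendsto_natCast_atTop_atTop
  have hsum := (tendsto_const_div_atTop_nhds_zero_nat (Real.log C)).add (hlog.const_mul (k : ℝ))
  rw [mul_zero, add_zero] at hsum
  refine hsum.congr' ((eventually_ne_atTop 0).mono fun n hn => ?_)
  dsimp only
  rw [Real.log_mul hC (by positivity), Real.log_pow]
  ring

theorem forall_lt_Tod_eq_false_iff (x : ℕ → Bool) (k : ℕ) :
    (∀ i < k, Tod x i = false) ↔ ∀ i < k, x i = true := by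
  induction k with
  | zero => simp
  | succ k ih =>
    rw [Nat.forall_lt_succ_right, Nat.forall_lt_succ_right, ih]
    unfold Tod
    by_cases h : ∀ i < k, x i = true <;> simp [h]

theorem forall_lt_TodInv_eq_true_iff (x : ℕ → Bool) (k : ℕ) :
    (∀ i < k, TodInv x i = true) ↔ ∀ i < k, x i = false := by
  induction k with
  | zero => simp
  | succ k ih =>
    rw [Nat.forall_lt_succ_right, Nat.forall_lt_succ_right, ih]
    unfold TodInv
    by_cases h : ∀ i < k, x i = false <;> simp [h]

theorem TodInv_Tod (x : ℕ → Bool) : TodInv (Tod x) = x := by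
  funext k
  simp only [TodInv, forall_lt_Tod_eq_false_iff]
  unfold Tod
  split_ifs <;> simp

theorem Tod_TodInv (x : ℕ → Bool) : Tod (TodInv x) = x := by
  funext k
  simp only [Tod, forall_lt_TodInv_eq_true_iff]
  unfold TodInv
  split_ifs <;> simp

def todPerm : Equiv.Perm (ℕ → Bool) := ⟨Tod, TodInv, TodInv_Tod, Tod_TodInv⟩

theorem zIter_eq_zpow (n : ℤ) (x : ℕ → Bool) : zIter n x = (todPerm ^ n) x := by
  unfold zIter
  split_ifs with hn
  · lift n to ℕ using hn
    simp [zpow_natCast, Equiv.Perm.coe_pow, todPerm]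
  · obtain ⟨k, rfl⟩ : ∃ k : ℕ, n = -k := ⟨(-n).toNat, by omega⟩
    simp [zpow_neg, zpow_natCast, ← inv_pow, Equiv.Perm.coe_pow, todPerm, Equiv.Perm.inv_def]

theorem Phi_semiconj : Function.Semiconj Phi Tod shiftZ := fun x => by
  funext n
  have h : zIter (n + 1) x = zIter n (Tod x) := by
    rw [zIter_eq_zpow, zIter_eq_zpow, zpow_add_one]
    rfl
  simp only [Phi, shiftZ]
  congr 1
  rw [h]

theorem DN_succ (n : ℕ) (x : ℕ → Bool) : DN (n + 1) x = DN n x + 2 ^ n * (x n).toNat :=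
  Finset.sum_range_succ _ _

theorem DN_lt (n : ℕ) (x : ℕ → Bool) : DN n x < 2 ^ n := by
  induction n with
  | zero => simp [DN]
  | succ n ih =>
    rw [DN_succ, pow_succ]
    cases x n <;> simp <;> omega

theorem DN_eq_DN_iff {n : ℕ} {x y : ℕ → Bool} : DN n x = DN n y ↔ x ∈ PiNat.cylinder y n := by
  rw [PiNat.mem_cylinder_iff]
  induction n with
  | zero => simp [DN]
  | succ n ih =>
    have := DN_lt n x
    have := DN_lt n y
    rw [DN_succ, DN_succ, Nat.forall_lt_succ_right, ← ih]
    cases x n <;> cases y n <;> simp <;> omega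

theorem DN_mod {i k : ℕ} (h : i ≤ k) (x : ℕ → Bool) : DN k x % 2 ^ i = DN i x := by
  induction k, h using Nat.le_induction with
  | base => exact Nat.mod_eq_of_lt (DN_lt i x)
  | succ k hik ih =>
    obtain ⟨c, hc⟩ := pow_dvd_pow 2 hik
    rw [DN_succ, hc, mul_assoc, Nat.add_mul_mod_self_left, ih]

theorem DN_eq_zero_iff (n : ℕ) (x : ℕ → Bool) : DN n x = 0 ↔ ∀ i < n, x i = false := by
  simp [DN, Finset.sum_eq_zero_iff]

theorem DN_Tod_add_carry (n : ℕ) (x : ℕ → Bool) :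
    DN n (Tod x) + (if ∀ i < n, x i = true then 2 ^ n else 0) = DN n x + 1 := by
  induction n with
  | zero => simp [DN]
  | succ n ih =>
    rw [DN_succ, DN_succ, pow_succ]
    by_cases hn : ∀ i < n, x i = true
    · have hT : Tod x n = !x n := if_pos hn
      rw [if_pos hn] at ih
      simp only [Nat.forall_lt_succ_right, eq_true hn, true_and, hT]
      cases x n <;> simp <;> omega
    · have hT : Tod x n = x n := if_neg hn
      rw [if_neg hn] at ih
      simp only [Nat.forall_lt_succ_right, eq_false hn, false_and, if_false, hT]
      omega

theorem DN_Tod (n : ℕ) (x : ℕ → Bool) : DN n (Tod x) = (DN n x + 1) % 2 ^ n := by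
  rw [← DN_Tod_add_carry]
  split_ifs
  · rw [Nat.add_mod_right, Nat.mod_eq_of_lt (DN_lt n _)]
  · rw [add_zero, Nat.mod_eq_of_lt (DN_lt n _)]

theorem DN_Tod_iterate (n k : ℕ) (x : ℕ → Bool) : DN n (Tod^[k] x) = (DN n x + k) % 2 ^ n := by
  induction k with
  | zero => simp [Nat.mod_eq_of_lt (DN_lt n x)]
  | succ k ih => rw [Function.iterate_succ_apply', DN_Tod, ih, Nat.mod_add_mod, add_assoc]

theorem setOf_DN_eq_DN (a : ℕ → Bool) (n : ℕ) : {x | DN n x = DN n a} = PiNat.cylinder a n :=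
  Set.ext fun _ => DN_eq_DN_iff

theorem measurableSet_cylinder (a : ℕ → Bool) (n : ℕ) : MeasurableSet (PiNat.cylinder a n) :=
  (PiNat.isOpen_cylinder _ a n).measurableSet

theorem measurableSpace_eq_generateFrom_cylinders :
    (inferInstance : MeasurableSpace (ℕ → Bool)) =
      .generateFrom {s | ∃ a n, s = PiNat.cylinder a n} := by
  rw [BorelSpace.measurable_eq (α := ℕ → Bool)]
  exact (PiNat.isTopologicalBasis_cylinders _).borel_eq_generateFrom

theorem isPiSystem_cylinders : IsPiSystem {s : Set (ℕ → Bool) | ∃ a n, s = PiNat.cylinder a n} := by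
  rintro _ ⟨a, n, rfl⟩ _ ⟨b, m, rfl⟩ ⟨z, hza, hzb⟩
  rw [PiNat.mem_cylinder_iff_eq] at hza hzb
  refine ⟨z, max n m, ?_⟩
  rw [← hza, ← hzb]
  refine (Set.subset_inter (PiNat.cylinder_anti _ (le_max_left n m))
    (PiNat.cylinder_anti _ (le_max_right n m))).antisymm' ?_
  rintro y ⟨hn, hm⟩ i hi
  exact (lt_max_iff.1 hi).elim (hn i) (hm i)

theorem measurable_Tod : Measurable Tod :=
  measurable_pi_iff.2 fun k => Measurable.ite (measurableSet_cylinder (fun _ => true) k)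
    ((Measurable.of_discrete (f := not)).comp (measurable_pi_apply k)) (measurable_pi_apply k)

theorem measurable_TodInv : Measurable TodInv :=
  measurable_pi_iff.2 fun k => Measurable.ite (measurableSet_cylinder (fun _ => false) k)
    ((Measurable.of_discrete (f := not)).comp (measurable_pi_apply k)) (measurable_pi_apply k)

theorem measurable_DN (n : ℕ) : Measurable (DN n) :=
  Finset.measurable_sum _ fun i _ =>
    ((Measurable.of_discrete (f := Bool.toNat)).comp (measurable_pi_apply i)).const_mul _

theorem measurableSet_setOf_DN_eq (n m : ℕ) : MeasurableSet {x | DN n x = m} :=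
  measurable_DN n (measurableSet_singleton m)

theorem preimage_Tod_setOf_DN {n m : ℕ} (hm : m < 2 ^ n) :
    Tod ⁻¹' {x | DN n x = (m + 1) % 2 ^ n} = {x | DN n x = m} := by
  ext x
  simp only [Set.mem_preimage, Set.mem_ofPred_eq, DN_Tod]
  exact ⟨fun h => (Nat.ModEq.add_right_cancel' 1 h).eq_of_lt_of_lt (DN_lt n x) hm,
    fun h => h ▸ rfl⟩

theorem preimage_Tod_cylinder (c : ℕ → Bool) (n : ℕ) :
    Tod ⁻¹' PiNat.cylinder (Tod c) n = PiNat.cylinder c n := by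
  rw [← setOf_DN_eq_DN, ← setOf_DN_eq_DN, DN_Tod, preimage_Tod_setOf_DN (DN_lt n c)]

theorem MeasureTheory.MeasurePreserving.measure_setOf_DN_eq {ρ : Measure (ℕ → Bool)}
    (hρ : MeasurePreserving Tod ρ ρ) {n m : ℕ} (hm : m < 2 ^ n) :
    ρ {x | DN n x = m} = ρ Set.univ / 2 ^ n := by
  have hconst : ∀ m < 2 ^ n, ρ {x | DN n x = m} = ρ {x | DN n x = 0} := by
    intro m hm
    induction m with
    | zero => rfl
    | succ m ih =>
      rw [← ih (by omega), ← preimage_Tod_setOf_DN (by omega : m < 2 ^ n),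
        hρ.measure_preimage (measurableSet_setOf_DN_eq n _).nullMeasurableSet,
        Nat.mod_eq_of_lt hm]
  have hsum : ∑ k ∈ Finset.range (2 ^ n), ρ {x | DN n x = k} =
      ρ (DN n ⁻¹' ↑(Finset.range (2 ^ n))) :=
    sum_measure_preimage_singleton _ fun k _ => measurableSet_setOf_DN_eq n k
  rw [Set.preimage_eq_univ_iff.2 fun _ ⟨x, hx⟩ => hx ▸ Finset.mem_range.2 (DN_lt n x)] at hsum
  rw [Finset.sum_congr rfl fun k hk => hconst k (Finset.mem_range.1 hk), Finset.sum_const,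
    Finset.card_range, nsmul_eq_mul] at hsum
  rw [hconst m hm, ENNReal.eq_div_iff (by positivity) (by simp)]
  exact_mod_cast hsum

def IsFairCoinMeasure (ν : Measure (ℕ → Bool)) : Prop :=
  ∀ (n : ℕ) (a : ℕ → Bool), ν (PiNat.cylinder a n) = 2⁻¹ ^ n

namespace IsFairCoinMeasure

variable {ν : Measure (ℕ → Bool)}

theorem isProbabilityMeasure (hν : IsFairCoinMeasure ν) : IsProbabilityMeasure ν :=
  ⟨by simpa using hν 0 fun _ => false⟩

theorem measurePreserving_Tod (hν : IsFairCoinMeasure ν) : MeasurePreserving Tod ν ν := by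
  have := hν.isProbabilityMeasure
  refine ⟨measurable_Tod, ext_of_generate_finite _ measurableSpace_eq_generateFrom_cylinders
    isPiSystem_cylinders ?_ ?_⟩
  · rintro _ ⟨a, n, rfl⟩
    rw [Measure.map_apply measurable_Tod (measurableSet_cylinder a n), ← Tod_TodInv a,
      preimage_Tod_cylinder, hν, hν]
  · rw [Measure.map_apply measurable_Tod MeasurableSet.univ, Set.preimage_univ]

theorem eq_smul_of_measurePreserving (hν : IsFairCoinMeasure ν) {ρ : Measure (ℕ → Bool)}
    [IsFiniteMeasure ρ] (hρ : MeasurePreserving Tod ρ ρ) : ρ = ρ Set.univ • ν := by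
  have := hν.isProbabilityMeasure
  refine ext_of_generate_finite _ measurableSpace_eq_generateFrom_cylinders
    isPiSystem_cylinders ?_ (by simp)
  rintro _ ⟨a, n, rfl⟩
  rw [← setOf_DN_eq_DN, hρ.measure_setOf_DN_eq (DN_lt n a), Measure.smul_apply, setOf_DN_eq_DN,
    hν, smul_eq_mul, div_eq_mul_inv, ENNReal.inv_pow]

theorem ergodic_Tod (hν : IsFairCoinMeasure ν) : Ergodic Tod ν := by
  have := hν.isProbabilityMeasure
  refine ⟨hν.measurePreserving_Tod, ⟨fun s hs hinv => ?_⟩⟩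
  have hrestrict : MeasurePreserving Tod (ν.restrict s) (ν.restrict s) := by
    simpa only [hinv] using hν.measurePreserving_Tod.restrict_preimage hs
  have hsq : ν (s ∩ s) = ν s * ν s := by
    simpa [hs] using congrArg (· s) (hν.eq_smul_of_measurePreserving hrestrict)
  rw [eventuallyConst_set', ae_eq_empty, ae_eq_univ_iff_measure_eq hs.nullMeasurableSet,
    measure_univ]
  exact ProbabilityTheory.measure_eq_zero_or_one_of_indepSet_self
    ((ProbabilityTheory.indepSet_iff_measure_inter_eq_mul hs hs ν).2 hsq)

end IsFairCoinMeasure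

theorem image_Tod_iterate_cyl0 {i j : ℕ} (hj : j < 2 ^ i) :
    Tod^[j] '' cyl0 i = {x | DN i x = j} := by
  ext x
  constructor
  · rintro ⟨y, hy, rfl⟩
    rw [Set.mem_ofPred_eq, DN_Tod_iterate, (DN_eq_zero_iff i y).2 hy, zero_add,
      Nat.mod_eq_of_lt hj]
  · intro hx
    have hinv := (Function.LeftInverse.iterate Tod_TodInv j) x
    refine ⟨TodInv^[j] x, (DN_eq_zero_iff i _).1 ?_, hinv⟩
    have h : DN i (TodInv^[j] x) + j ≡ 0 + j [MOD 2 ^ i] := by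
      rw [Nat.ModEq, ← DN_Tod_iterate, hinv, hx, zero_add, Nat.mod_eq_of_lt hj]
    exact (Nat.ModEq.add_right_cancel' j h).eq_of_lt_of_lt (DN_lt i _) (Nat.two_pow_pos i)

theorem mem_Aset_iff {x : ℕ → Bool} : x ∈ Aset ↔ ∃ i, 5 ≤ i ∧ DN i x < i := by
  simp only [Aset, Set.mem_iUnion, exists_prop]
  refine exists_congr fun i => and_congr_right fun _ => ⟨?_, fun h => ⟨DN i x, h, ?_⟩⟩
  · rintro ⟨j, hj, hx⟩
    rw [image_Tod_iterate_cyl0 (hj.trans Nat.lt_two_pow_self)] at hx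
    exact hx ▸ hj
  · rw [image_Tod_iterate_cyl0 (h.trans Nat.lt_two_pow_self)]
    rfl

theorem measurableSet_Aset : MeasurableSet Aset := by
  have : Aset = ⋃ (i : ℕ) (_ : 5 ≤ i), DN i ⁻¹' Set.Iio i := by
    ext x
    simp [mem_Aset_iff]
  rw [this]
  exact .iUnion fun i => .iUnion fun _ => measurable_DN i measurableSet_Iio

theorem measurable_zIter (n : ℤ) : Measurable (zIter n) := by
  by_cases h : 0 ≤ n
  · rw [show zIter n = Tod^[n.toNat] from funext fun _ => if_pos h]
    exact measurable_Tod.iterate _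
  · rw [show zIter n = TodInv^[(-n).toNat] from funext fun _ => if_neg h]
    exact measurable_TodInv.iterate _

theorem measurable_Phi : Measurable Phi :=
  measurable_pi_iff.2 fun n => measurable_to_bool <| by
    classical
    convert measurable_zIter n measurableSet_Aset using 1
    ext x
    exact decide_eq_true_iff

theorem measurable_shiftZ : Measurable shiftZ :=
  measurable_pi_iff.2 fun n => measurable_pi_apply (n + 1)

theorem preimage_Phi_setOf_apply_zero : Phi ⁻¹' {z | z 0 = true} = Aset := by
  classical
  ext x
  show decide _ = true ↔ _
  rw [decide_eq_true_iff]
  simp [zIter]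

/-- A least level `i > 5` with `DN i x < i` has `DN (i - 1) x = DN i x`, which forces
`DN i x = i - 1`. -/
theorem Aset_subset_union : Aset ⊆ {x | DN 5 x < 5} ∪ ⋃ k : ℕ, {x | DN (k + 6) x = k + 5} := by
  intro x hx
  obtain ⟨i, hi, hlt⟩ := mem_Aset_iff.1 hx
  induction i, hi using Nat.le_induction with
  | base => exact Or.inl hlt
  | succ i hi ih =>
    by_cases h : DN i x < i
    · exact ih h
    · have hmod := DN_mod (Nat.le_succ i) x
      rw [Nat.mod_eq_of_lt (hlt.trans_le (Nat.succ_le_of_lt Nat.lt_two_pow_self))] at hmod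
      refine Or.inr (Set.mem_iUnion.2 ⟨i - 5, ?_⟩)
      rw [Set.mem_ofPred_eq, show i - 5 + 6 = i + 1 by omega]
      omega

namespace IsFairCoinMeasure

variable {ν : Measure (ℕ → Bool)}

theorem measure_setOf_DN_eq (hν : IsFairCoinMeasure ν) {n m : ℕ} (hm : m < 2 ^ n) :
    ν {x | DN n x = m} = 2⁻¹ ^ n := by
  have := hν.isProbabilityMeasure
  rw [hν.measurePreserving_Tod.measure_setOf_DN_eq hm, measure_univ, one_div,
    ENNReal.inv_pow]

theorem measure_setOf_DN_lt (hν : IsFairCoinMeasure ν) {n m : ℕ} (hm : m ≤ 2 ^ n) :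
    ν {x | DN n x < m} = m * 2⁻¹ ^ n := by
  have hsum : ∑ k ∈ Finset.range m, ν {x | DN n x = k} = ν (DN n ⁻¹' ↑(Finset.range m)) :=
    sum_measure_preimage_singleton _ fun k _ => measurableSet_setOf_DN_eq n k
  rw [Finset.sum_congr rfl fun k hk => hν.measure_setOf_DN_eq
    ((Finset.mem_range.1 hk).trans_le hm), Finset.sum_const, Finset.card_range,
    nsmul_eq_mul] at hsum
  rw [hsum]
  congr 1
  ext x
  simp

theorem le_measure_Aset (hν : IsFairCoinMeasure ν) : 5 / 32 ≤ ν Aset := by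
  calc 5 / 32 = ν {x | DN 5 x < 5} := by
        rw [hν.measure_setOf_DN_lt (by norm_num), ← ENNReal.inv_pow, div_eq_mul_inv]
        norm_num
    _ ≤ ν Aset := measure_mono fun x hx => mem_Aset_iff.2 ⟨5, le_rfl, hx⟩

theorem measure_Aset_le (hν : IsFairCoinMeasure ν) : ν Aset ≤ 6 / 32 := by
  have htail : ∑' k : ℕ, (2⁻¹ : ℝ≥0∞) ^ (k + 6) = 2⁻¹ ^ 5 := by
    simp_rw [pow_add, ENNReal.tsum_mul_right, ENNReal.tsum_geometric_two]
    rw [pow_succ _ 5, mul_left_comm, ENNReal.mul_inv_cancel two_ne_zero ENNReal.ofNat_ne_top,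
      mul_one]
  calc ν Aset ≤ ν {x | DN 5 x < 5} + ν (⋃ k : ℕ, {x | DN (k + 6) x = k + 5}) :=
        (measure_mono Aset_subset_union).trans (measure_union_le _ _)
    _ ≤ 5 * 2⁻¹ ^ 5 + ∑' k : ℕ, 2⁻¹ ^ (k + 6) := by
        rw [hν.measure_setOf_DN_lt (by norm_num), Nat.cast_ofNat]
        gcongr
        refine (measure_iUnion_le _).trans_eq (tsum_congr fun k => hν.measure_setOf_DN_eq ?_)
        exact lt_trans (by omega) Nat.lt_two_pow_self
    _ = 6 / 32 := by
        rw [htail, ← ENNReal.inv_pow, div_eq_mul_inv, ← add_one_mul]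
        norm_num

end IsFairCoinMeasure

theorem ergodic_shiftZ_map_Phi {ν : Measure (ℕ → Bool)} (hν : IsFairCoinMeasure ν) :
    Ergodic shiftZ (ν.map Phi) :=
  (measurable_Phi.measurePreserving ν).ergodic_of_ergodic_semiconj hν.ergodic_Tod
    measurable_shiftZ Phi_semiconj

theorem map_Phi_Ysub {ν : Measure (ℕ → Bool)} [IsProbabilityMeasure ν] : ν.map Phi Ysub = 1 := by
  rw [Ysub, Measure.map_apply measurable_Phi isClosed_closure.measurableSet,
    Set.preimage_eq_univ_iff.2 subset_closure, measure_univ]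

theorem cylZ_eq_preimage (n : ℕ) (w : Fin n → Bool) :
    cylZ n w = (fun (z : ℤ → Bool) (i : Fin n) => z i) ⁻¹' {w} := by
  ext z
  simp [cylZ, funext_iff]

theorem measurableSet_cylZ (n : ℕ) (w : Fin n → Bool) : MeasurableSet (cylZ n w) := by
  rw [cylZ_eq_preimage]
  exact measurable_pi_lambda _ (fun i => measurable_pi_apply _) (measurableSet_singleton w)

theorem sum_measure_cylZ (μ : Measure (ℤ → Bool)) (n : ℕ) :
    ∑ w : Fin n → Bool, μ (cylZ n w) = μ Set.univ := by
  simp_rw [cylZ_eq_preimage]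
  rw [sum_measure_preimage_singleton _ fun w _ => cylZ_eq_preimage n w ▸ measurableSet_cylZ n w,
    Finset.coe_univ, Set.preimage_univ]

theorem sum_negMulLog_measure_cylZ_le (μ : Measure (ℤ → Bool)) [IsProbabilityMeasure μ] {n : ℕ}
    (S : Finset (Fin n → Bool)) (hS : ∀ w, μ (cylZ n w) ≠ 0 → w ∈ S) :
    ∑ w, Real.negMulLog (μ (cylZ n w)).toReal ≤ Real.log S.card := by
  have hzero : ∀ w ∉ S, (μ (cylZ n w)).toReal = 0 := fun w hw => by
    rw [show μ (cylZ n w) = 0 from by_contra fun h => hw (hS w h), ENNReal.toReal_zero]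
  rw [← Finset.sum_subset (Finset.subset_univ S) fun w _ hw => by
    rw [hzero w hw, Real.negMulLog_zero]]
  refine sum_negMulLog_le_log_card S (fun _ _ => ENNReal.toReal_nonneg) ?_
  rw [Finset.sum_subset (Finset.subset_univ S) fun w _ hw => hzero w hw,
    ← ENNReal.toReal_sum fun w _ => measure_ne_top μ _, sum_measure_cylZ, measure_univ,
    ENNReal.toReal_one]

def cutoff (n : ℕ) : ℕ := Nat.log 2 n + 5

theorem lt_two_pow_cutoff (n : ℕ) : n < 2 ^ cutoff n :=
  (Nat.lt_pow_succ_log_self one_lt_two n).trans_le (Nat.pow_le_pow_right two_pos (by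
    unfold cutoff; omega))

theorem two_pow_cutoff_le {n : ℕ} (hn : n ≠ 0) : 2 ^ cutoff n ≤ 32 * n := by
  rw [cutoff, pow_add, mul_comm]
  exact Nat.mul_le_mul_left _ (Nat.pow_log_le_self 2 hn)

/-- Visits to `Aset` decided by levels `i ≤ cutoff n`, read off from `ρ = DN (cutoff n) x`. -/
def lowVisits (n ρ : ℕ) : Finset ℕ :=
  (Finset.range n).filter fun m => ∃ i ≤ cutoff n, 5 ≤ i ∧ (ρ + m) % 2 ^ i < i

/-- With `ρ = DN (cutoff n) x`: the common time `m < n` at which `DN i x + m` reaches `2 ^ i`, for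
every level `i > cutoff n` that wraps around before time `n`. -/
def wrapStart (n ρ : ℕ) : ℕ := (2 ^ cutoff n - ρ) % 2 ^ cutoff n

def visitPattern (n : ℕ) (c : ℕ × ℕ × ℕ) : Finset ℕ :=
  lowVisits n c.1 ∪ Finset.range c.2.1 ∪ Finset.Ico (wrapStart n c.1) (wrapStart n c.1 + c.2.2)

def patternCodes (n : ℕ) : Finset (ℕ × ℕ × ℕ) :=
  Finset.range (2 ^ cutoff n) ×ˢ Finset.range (n + 1) ×ˢ Finset.range (n + 1)

theorem two_pow_sub_DN_eq_wrapStart {n m i : ℕ} {x : ℕ → Bool} (hm : m < n) (hi : cutoff n < i)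
    (h : 2 ^ i ≤ DN i x + m) : 2 ^ i - DN i x = wrapStart n (DN (cutoff n) x) := by
  set K := cutoff n
  have hK : n < 2 ^ K := lt_two_pow_cutoff n
  have hDN : DN K x ≡ DN i x [MOD 2 ^ K] :=
    (Nat.mod_eq_of_lt (DN_lt K x)).trans (DN_mod hi.le x).symm
  have h₁ : 2 ^ i - DN i x + DN K x ≡ 0 [MOD 2 ^ K] :=
    calc 2 ^ i - DN i x + DN K x ≡ 2 ^ i - DN i x + DN i x [MOD 2 ^ K] := hDN.add_left _
      _ = 2 ^ i := Nat.sub_add_cancel (DN_lt i x).le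
      _ ≡ 0 [MOD 2 ^ K] := Nat.modEq_zero_iff_dvd.2 (pow_dvd_pow 2 hi.le)
  have h₂ : wrapStart n (DN K x) + DN K x ≡ 0 [MOD 2 ^ K] :=
    calc wrapStart n (DN K x) + DN K x ≡ 2 ^ K - DN K x + DN K x [MOD 2 ^ K] :=
          (Nat.mod_modEq _ _).add_right _
      _ = 2 ^ K := Nat.sub_add_cancel (DN_lt K x).le
      _ ≡ 0 [MOD 2 ^ K] := Nat.modEq_zero_iff_dvd.2 dvd_rfl
  exact (Nat.ModEq.add_right_cancel' _ (h₁.trans h₂.symm)).eq_of_lt_of_lt (by omega)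
    (Nat.mod_lt _ (Nat.two_pow_pos K))

theorem exists_DN_add_mod_lt_iff {n m : ℕ} (hm : m < n) (x : ℕ → Bool) :
    (∃ i, 5 ≤ i ∧ (DN i x + m) % 2 ^ i < i) ↔
      (∃ i ≤ cutoff n, 5 ≤ i ∧ (DN (cutoff n) x + m) % 2 ^ i < i) ∨
      (∃ i, cutoff n < i ∧ DN i x + m < i) ∨
      ∃ i, cutoff n < i ∧ 2 ^ i ≤ DN i x + m ∧ DN i x + m < 2 ^ i + i := by
  have hlow : ∀ i ≤ cutoff n, (DN (cutoff n) x + m) % 2 ^ i = (DN i x + m) % 2 ^ i := fun i hi => by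
    rw [← DN_mod hi, Nat.mod_add_mod]
  have hhigh : ∀ i, cutoff n < i → ((DN i x + m) % 2 ^ i < i ↔
      DN i x + m < i ∨ 2 ^ i ≤ DN i x + m ∧ DN i x + m < 2 ^ i + i) := fun i hi =>
    Nat.add_mod_lt_iff (DN_lt i x) (hm.trans ((lt_two_pow_cutoff n).trans
      (Nat.pow_lt_pow_right one_lt_two hi)))
  constructor
  · rintro ⟨i, h5, hlt⟩
    rcases le_or_gt i (cutoff n) with hi | hi
    · exact Or.inl ⟨i, hi, h5, (hlow i hi).trans_lt hlt⟩
    · exact ((hhigh i hi).1 hlt).elim (fun h => Or.inr (Or.inl ⟨i, hi, h⟩))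
        fun h => Or.inr (Or.inr ⟨i, hi, h⟩)
  · have hcut : 5 ≤ cutoff n := by unfold cutoff; omega
    rintro (⟨i, hi, h5, hlt⟩ | ⟨i, hi, h⟩ | ⟨i, hi, h⟩)
    · exact ⟨i, h5, (hlow i hi).symm.trans_lt hlt⟩
    · exact ⟨i, by omega, (hhigh i hi).2 (Or.inl h)⟩
    · exact ⟨i, by omega, (hhigh i hi).2 (Or.inr h)⟩

open Classical in
noncomputable def earlyVisits (n : ℕ) (x : ℕ → Bool) : Finset ℕ :=
  (Finset.range n).filter fun m => ∃ i, cutoff n < i ∧ DN i x + m < i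

open Classical in
noncomputable def wrapVisits (n : ℕ) (x : ℕ → Bool) : Finset ℕ :=
  (Finset.range n).filter fun m => ∃ i, cutoff n < i ∧ 2 ^ i ≤ DN i x + m ∧ DN i x + m < 2 ^ i + i

theorem mem_earlyVisits {n m : ℕ} {x : ℕ → Bool} :
    m ∈ earlyVisits n x ↔ m < n ∧ ∃ i, cutoff n < i ∧ DN i x + m < i := by
  simp [earlyVisits]

theorem mem_wrapVisits {n m : ℕ} {x : ℕ → Bool} :
    m ∈ wrapVisits n x ↔
      m < n ∧ ∃ i, cutoff n < i ∧ 2 ^ i ≤ DN i x + m ∧ DN i x + m < 2 ^ i + i := by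
  simp [wrapVisits]

theorem earlyVisits_eq_range (n : ℕ) (x : ℕ → Bool) :
    earlyVisits n x = Finset.range (earlyVisits n x).card := by
  rw [Finset.range_eq_Ico]
  refine (Finset.eq_Ico_of_forall_Icc_subset fun m hm => ⟨Nat.zero_le m, fun k hk => ?_⟩).trans
    (by rw [zero_add])
  obtain ⟨hmn, i, hi, h⟩ := mem_earlyVisits.1 hm
  have hkm := (Finset.mem_Icc.1 hk).2
  exact mem_earlyVisits.2 ⟨by omega, i, hi, by omega⟩

theorem wrapVisits_eq_Ico (n : ℕ) (x : ℕ → Bool) :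
    wrapVisits n x = Finset.Ico (wrapStart n (DN (cutoff n) x))
      (wrapStart n (DN (cutoff n) x) + (wrapVisits n x).card) := by
  refine Finset.eq_Ico_of_forall_Icc_subset fun m hm => ?_
  obtain ⟨hmn, i, hi, h₁, h₂⟩ := mem_wrapVisits.1 hm
  have hβ := two_pow_sub_DN_eq_wrapStart hmn hi h₁
  refine ⟨by omega, fun k hk => ?_⟩
  obtain ⟨hβk, hkm⟩ := Finset.mem_Icc.1 hk
  exact mem_wrapVisits.2 ⟨by omega, i, hi, by omega, by omega⟩

theorem exists_visitPattern (n : ℕ) (x : ℕ → Bool) :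
    ∃ c ∈ patternCodes n, ∀ m < n, (Tod^[m] x ∈ Aset ↔ m ∈ visitPattern n c) := by
  have hcard : ∀ S : Finset ℕ, (∀ m ∈ S, m < n) → S.card < n + 1 := fun S hS =>
    Nat.lt_succ_of_le ((Finset.card_le_card fun m hm => Finset.mem_range.2 (hS m hm)).trans_eq
      (Finset.card_range n))
  refine ⟨(DN (cutoff n) x, (earlyVisits n x).card, (wrapVisits n x).card), ?_, fun m hm => ?_⟩
  · simp only [patternCodes, Finset.mem_product, Finset.mem_range]
    exact ⟨DN_lt _ x, hcard _ fun m hm => (mem_earlyVisits.1 hm).1,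
      hcard _ fun m hm => (mem_wrapVisits.1 hm).1⟩
  · have hE := Finset.ext_iff.1 (earlyVisits_eq_range n x) m
    have hF := Finset.ext_iff.1 (wrapVisits_eq_Ico n x) m
    simp only [mem_earlyVisits, mem_wrapVisits, hm, true_and] at hE hF
    simp only [mem_Aset_iff, DN_Tod_iterate, exists_DN_add_mod_lt_iff hm, hE, hF, visitPattern,
      lowVisits, Finset.mem_union, Finset.mem_filter, Finset.mem_range, hm, true_and, or_assoc]

def wordOf (n : ℕ) (S : Finset ℕ) : Fin n → Bool := fun i => decide ((i : ℕ) ∈ S)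

def admissibleWords (n : ℕ) : Finset (Fin n → Bool) :=
  (patternCodes n).image fun c => wordOf n (visitPattern n c)

theorem card_admissibleWords_le (n : ℕ) :
    (admissibleWords n).card ≤ 2 ^ cutoff n * ((n + 1) * (n + 1)) := by
  refine Finset.card_image_le.trans_eq ?_
  simp [patternCodes]

theorem Phi_word_mem_admissibleWords (n : ℕ) (x : ℕ → Bool) :
    (fun i : Fin n => Phi x i) ∈ admissibleWords n := by
  classical
  obtain ⟨c, hc, hvisit⟩ := exists_visitPattern n x
  refine Finset.mem_image.2 ⟨c, hc, funext fun i => ?_⟩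
  rw [wordOf, Phi, Bool.eq_iff_iff, decide_eq_true_iff, decide_eq_true_iff, ← hvisit i i.isLt]
  simp [zIter]

theorem log_card_admissibleWords_le {n : ℕ} (hn : n ≠ 0) :
    Real.log (admissibleWords n).card ≤ Real.log (128 * n ^ 3) := by
  have hpos : 0 < (admissibleWords n).card :=
    Finset.card_pos.2 ⟨_, Phi_word_mem_admissibleWords n fun _ => false⟩
  have hle : (admissibleWords n).card ≤ 128 * n ^ 3 := by
    refine (card_admissibleWords_le n).trans ?_
    have h₁ := two_pow_cutoff_le hn
    have h₂ : n + 1 ≤ 2 * n := by omega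
    calc 2 ^ cutoff n * ((n + 1) * (n + 1)) ≤ 32 * n * (2 * n * (2 * n)) := by gcongr
      _ = 128 * n ^ 3 := by ring
  exact Real.log_le_log (by exact_mod_cast hpos) (by exact_mod_cast hle)

theorem mem_admissibleWords_of_map_Phi_ne_zero {ν : Measure (ℕ → Bool)} {n : ℕ}
    {w : Fin n → Bool} (hw : ν.map Phi (cylZ n w) ≠ 0) : w ∈ admissibleWords n := by
  rw [Measure.map_apply measurable_Phi (measurableSet_cylZ n w)] at hw
  obtain ⟨x, hx⟩ := nonempty_of_measure_ne_zero hw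
  rw [show w = fun i : Fin n => Phi x i from funext fun i => (hx i).symm]
  exact Phi_word_mem_admissibleWords n x

theorem tendsto_entropy_map_Phi (ν : Measure (ℕ → Bool)) [IsProbabilityMeasure ν] :
    Tendsto (fun n : ℕ =>
      (∑ w : Fin n → Bool, Real.negMulLog ((ν.map Phi) (cylZ n w)).toReal) / n) atTop (𝓝 0) := by
  have := Measure.isProbabilityMeasure_map (μ := ν) measurable_Phi.aemeasurable
  refine squeeze_zero' (.of_forall fun n => div_nonneg (Finset.sum_nonneg fun w _ =>
      Real.negMulLog_nonneg ENNReal.toReal_nonneg measureReal_le_one) n.cast_nonneg)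
    ((eventually_ne_atTop 0).mono fun n hn => div_le_div_of_nonneg_right ?_ n.cast_nonneg)
    (tendsto_log_mul_pow_div_atTop (by norm_num : (128 : ℝ) ≠ 0) 3)
  exact (sum_negMulLog_measure_cylZ_le _ _ fun _ hw =>
    mem_admissibleWords_of_map_Phi_ne_zero hw).trans (log_card_admissibleWords_le hn)

/-- `μ = Φ_*ν` is shift-invariant, ergodic, gives `Y` full measure, has
measure-theoretic entropy `0` (i.e. `H_n(μ)/n → 0` for the cylinder partitions, where
`H_n(μ) = Σ_{|w|=n} −μ[w] log μ[w]`), and `5/32 ≤ μ([β]) ≤ 6/32`. -/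
theorem stmt16 (ν : Measure (ℕ → Bool))
    (hν : ∀ (n : ℕ) (a : ℕ → Bool), ν {x | ∀ i < n, x i = a i} = (2 : ℝ≥0∞)⁻¹ ^ n)
    (μ : Measure (ℤ → Bool)) (hμ : μ = Measure.map Phi ν) :
    MeasurePreserving shiftZ μ μ ∧
    Ergodic shiftZ μ ∧
    μ Ysub = 1 ∧
    Filter.Tendsto
      (fun n : ℕ =>
        (∑ w : Fin n → Bool, Real.negMulLog ((μ (cylZ n w)).toReal)) / n)
      Filter.atTop (nhds 0) ∧
    5 / 32 ≤ μ {z : ℤ → Bool | z 0 = true} ∧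
    μ {z : ℤ → Bool | z 0 = true} ≤ 6 / 32 := by
  have hfair : IsFairCoinMeasure ν := hν
  have := hfair.isProbabilityMeasure
  have hβ : μ {z : ℤ → Bool | z 0 = true} = ν Aset := by
    rw [hμ, Measure.map_apply measurable_Phi (measurableSet_eq_fun (measurable_pi_apply 0)
      measurable_const), preimage_Phi_setOf_apply_zero]
  subst hμ
  exact ⟨(ergodic_shiftZ_map_Phi hfair).toMeasurePreserving, ergodic_shiftZ_map_Phi hfair,
    map_Phi_Ysub, tendsto_entropy_map_Phi ν, hβ ▸ hfair.le_measure_Aset,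
    hβ ▸ hfair.measure_Aset_le⟩
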